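/- FP16-set TV contribution bound: with the setting of the tail-restricted TV lemma (s' = s on F, |s_t - s'_t| ≤ Δ on T, a = softmax(s), a' = softmax(s'), α = Σ_{t∈T} a_t), it holds that Σ_{t∈F} |a_t - a'_t| ≤ α·(e^{Δ} - 1). -/

import Mathlib

open Real Finset

/-!
Scores that agree on `F` give tokens of `F` the same numerator `e^{s_t}`, so on `F` the two
softmax vectors differ only through their normalisers: `|a_t - a'_t| = e^{s_t} |Z' - Z| / (Z Z')`.
Summing over `F` and using `∑_{t ∈ F} e^{s_t} ≤ Z'` leaves `|Z' - Z| / Z`. Only the scores on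
`T` move, each `e^{s_t}` by at most the factor `e^{±Δ}`, so `|Z' - Z| ≤ (e^Δ - 1) ∑_{t ∈ T} e^{s_t}`,
and dividing by `Z` gives `α (e^Δ - 1)`.
-/

namespace Real

theorem abs_exp_sub_one_le_exp_sub_one {x Δ : ℝ} (h : |x| ≤ Δ) : |exp x - 1| ≤ exp Δ - 1 := by
  obtain ⟨hlo, hhi⟩ := abs_le.mp h
  rcases le_total 0 x with hx | hx
  · rw [abs_of_nonneg (by simpa using one_le_exp hx)]
    linarith [exp_le_exp.mpr hhi]
  · rw [abs_of_nonpos (by simpa using exp_le_one_iff.mpr hx)]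
    -- `1 - e^{-Δ} ≤ e^Δ - 1` is `e^Δ + e^{-Δ} ≥ 2`, from `1 + y ≤ e^y` at `y = ±Δ`.
    linarith [exp_le_exp.mpr hlo, add_one_le_exp Δ, add_one_le_exp (-Δ)]

theorem abs_exp_sub_exp_le {x y Δ : ℝ} (h : |y - x| ≤ Δ) :
    |exp y - exp x| ≤ exp x * (exp Δ - 1) := by
  have hfactor : exp y - exp x = exp x * (exp (y - x) - 1) := by
    rw [mul_sub, ← exp_add]; ring_nf
  rw [hfactor, abs_mul, abs_of_pos (exp_pos x)]
  exact mul_le_mul_of_nonneg_left (abs_exp_sub_one_le_exp_sub_one h) (exp_pos x).le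

end Real

section Softmax

variable {ι : Type*} [Fintype ι]

noncomputable def softmax (s : ι → ℝ) (t : ι) : ℝ := exp (s t) / ∑ j, exp (s j)

theorem sum_exp_pos [Nonempty ι] (s : ι → ℝ) : 0 < ∑ j, exp (s j) :=
  sum_pos (fun j _ ↦ exp_pos (s j)) univ_nonempty

theorem sum_softmax_eq_sum_exp_div (s : ι → ℝ) (T : Finset ι) :
    ∑ t ∈ T, softmax s t = (∑ t ∈ T, exp (s t)) / ∑ j, exp (s j) := by
  simp only [softmax, sum_div]

theorem abs_sum_exp_sub_sum_exp_le [DecidableEq ι] {s s' : ι → ℝ} {Δ : ℝ} {F : Finset ι}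
    (hF : ∀ t ∈ F, s' t = s t) (hT : ∀ t ∈ Fᶜ, |s t - s' t| ≤ Δ) :
    |∑ j, exp (s' j) - ∑ j, exp (s j)| ≤ (∑ t ∈ Fᶜ, exp (s t)) * (exp Δ - 1) := by
  have hdiff : ∑ j, exp (s' j) - ∑ j, exp (s j) = ∑ t ∈ Fᶜ, (exp (s' t) - exp (s t)) := by
    rw [← sum_sub_distrib, ← sum_add_sum_compl F, sum_eq_zero fun t ht ↦ by rw [hF t ht, sub_self],
      zero_add]
  calc |∑ j, exp (s' j) - ∑ j, exp (s j)|
      ≤ ∑ t ∈ Fᶜ, |exp (s' t) - exp (s t)| := hdiff ▸ abs_sum_le_sum_abs _ _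
    _ ≤ ∑ t ∈ Fᶜ, exp (s t) * (exp Δ - 1) :=
        sum_le_sum fun t ht ↦ abs_exp_sub_exp_le (abs_sub_comm (s t) (s' t) ▸ hT t ht)
    _ = (∑ t ∈ Fᶜ, exp (s t)) * (exp Δ - 1) := (sum_mul ..).symm

theorem abs_softmax_sub_softmax_of_eq [Nonempty ι] {s s' : ι → ℝ} {t : ι} (ht : s' t = s t) :
    |softmax s t - softmax s' t| =
      exp (s' t) * (|∑ j, exp (s' j) - ∑ j, exp (s j)| / ((∑ j, exp (s j)) * ∑ j, exp (s' j))) := by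
  have hZ := sum_exp_pos s
  have hZ' := sum_exp_pos s'
  have hdiff : softmax s t - softmax s' t =
      exp (s' t) * (∑ j, exp (s' j) - ∑ j, exp (s j)) / ((∑ j, exp (s j)) * ∑ j, exp (s' j)) := by
    rw [softmax, softmax, ← ht]
    field_simp
  rw [hdiff, abs_div, abs_mul, abs_of_pos (exp_pos _), abs_of_pos (mul_pos hZ hZ'), mul_div_assoc]

theorem sum_abs_softmax_sub_softmax_le [Nonempty ι] {s s' : ι → ℝ} {F : Finset ι}
    (hF : ∀ t ∈ F, s' t = s t) :
    ∑ t ∈ F, |softmax s t - softmax s' t| ≤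
      |∑ j, exp (s' j) - ∑ j, exp (s j)| / ∑ j, exp (s j) := by
  set Z := ∑ j, exp (s j)
  set Z' := ∑ j, exp (s' j)
  have hZ' : 0 < Z' := sum_exp_pos s'
  have hF_le : ∑ t ∈ F, exp (s' t) ≤ Z' :=
    sum_le_sum_of_subset_of_nonneg (subset_univ F) fun j _ _ ↦ (exp_pos (s' j)).le
  calc ∑ t ∈ F, |softmax s t - softmax s' t|
      = (∑ t ∈ F, exp (s' t)) * (|Z' - Z| / (Z * Z')) := by
        rw [sum_mul]; exact sum_congr rfl fun t ht ↦ abs_softmax_sub_softmax_of_eq (hF t ht)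
    _ ≤ Z' * (|Z' - Z| / (Z * Z')) := by gcongr
    _ = |Z' - Z| / Z := by field_simp

theorem sum_abs_softmax_sub_softmax_le_mul [Nonempty ι] [DecidableEq ι] {s s' : ι → ℝ} {Δ : ℝ} {F : Finset ι}
    (hF : ∀ t ∈ F, s' t = s t) (hT : ∀ t ∈ Fᶜ, |s t - s' t| ≤ Δ) :
    ∑ t ∈ F, |softmax s t - softmax s' t| ≤ (∑ t ∈ Fᶜ, softmax s t) * (exp Δ - 1) := by
  calc ∑ t ∈ F, |softmax s t - softmax s' t|
      ≤ |∑ j, exp (s' j) - ∑ j, exp (s j)| / ∑ j, exp (s j) := sum_abs_softmax_sub_softmax_le hF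
    _ ≤ (∑ t ∈ Fᶜ, exp (s t)) * (exp Δ - 1) / ∑ j, exp (s j) := by
        gcongr; exact abs_sum_exp_sub_sum_exp_le hF hT
    _ = (∑ t ∈ Fᶜ, softmax s t) * (exp Δ - 1) := by
        rw [sum_softmax_eq_sum_exp_div, div_mul_eq_mul_div]

end Softmax

theorem fp16_set_contribution_bound_general (N : ℕ) (hN : 0 < N)
    (s s' : Fin N → ℝ) (Δ : ℝ)
    (F T : Finset (Fin N)) (hFT : T = Fᶜ)
    (hF : ∀ t ∈ F, s' t = s t)
    (hT : ∀ t ∈ T, |s t - s' t| ≤ Δ)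
    (a a' : Fin N → ℝ)
    (ha : ∀ t, a t = Real.exp (s t) / ∑ j, Real.exp (s j))
    (ha' : ∀ t, a' t = Real.exp (s' t) / ∑ j, Real.exp (s' j))
    (α : ℝ) (hα : α = ∑ t ∈ T, a t) :
    ∑ t ∈ F, |a t - a' t| ≤ α * (Real.exp Δ - 1) := by
  have : Nonempty (Fin N) := ⟨⟨0, hN⟩⟩
  obtain rfl : a = softmax s := funext ha
  obtain rfl : a' = softmax s' := funext ha'
  subst hFT hα
  exact sum_abs_softmax_sub_softmax_le_mul hF hT

/-- FP16-set TV contribution bound: the unperturbed tokens contribute at most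
`α (e^{Δ} - 1)` to the ℓ1 distance between the two softmax distributions. -/
theorem fp16_set_contribution_bound (N : ℕ) (hN : 0 < N)
    (s s' : Fin N → ℝ) (Δ : ℝ) (hΔ : 0 ≤ Δ)
    (F T : Finset (Fin N)) (hFT : T = Fᶜ)
    (hF : ∀ t ∈ F, s' t = s t)
    (hT : ∀ t ∈ T, |s t - s' t| ≤ Δ)
    (a a' : Fin N → ℝ)
    (ha : ∀ t, a t = Real.exp (s t) / ∑ j, Real.exp (s j))
    (ha' : ∀ t, a' t = Real.exp (s' t) / ∑ j, Real.exp (s' j))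
    (α : ℝ) (hα : α = ∑ t ∈ T, a t) :
    ∑ t ∈ F, |a t - a' t| ≤ α * (Real.exp Δ - 1) :=
  fp16_set_contribution_bound_general N hN s s' Δ F T hFT hF hT a a' ha ha' α hα
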